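/- Let l ≥ 4 be an integer with l ≡ 4 (mod 6), and let H be a tournament on 4 vertices such that the directed cycle of length l admits a homomorphism to H. Then H is isomorphic to the tournament T4 on vertex set {1,2,3,4} with arcs 1→2, 1→3, 2→3, 2→4, 3→4, 4→1. -/

import Mathlib

/-!
Splitting a closed walk at a repeated vertex produces two closed walks whose lengths add up to
the original length, so a closed walk of length `l` with `3 ∤ l` can be shortened to one of length
at most `4` that is still not divisible by `3`. In an oriented graph closed walks of length `1` or
`2` do not exist, so we obtain a Hamiltonian directed `4`-cycle `p → q → r → s → p`. In a tournament
its two diagonals are oriented somehow, and each of the four choices is the arc set of `T4` after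
rotating the cycle.
-/

/-- An oriented graph: no loops, no pair of opposite arcs. -/
structure OrientedGraph (V : Type*) where
  arc : V → V → Prop
  irrefl : ∀ v, ¬ arc v v
  asymm : ∀ u v, arc u v → ¬ arc v u

/-- The underlying simple graph of an oriented graph. -/
def OrientedGraph.underlying {V : Type*} (G : OrientedGraph V) : SimpleGraph V where
  Adj u v := G.arc u v ∨ G.arc v u
  symm := ⟨fun _ _ h => h.symm⟩
  loopless := ⟨fun v h => h.elim (G.irrefl v) (G.irrefl v)⟩

/-- Homomorphisms of oriented graphs. -/
def OrientedGraph.IsHom {V W : Type*} (G : OrientedGraph V) (H : OrientedGraph W)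
    (φ : V → W) : Prop :=
  ∀ u v, G.arc u v → H.arc (φ u) (φ v)

/-- The tournament `T4` on vertex set `{1, 2, 3, 4}` (represented by `Fin 4`, with
vertex `k+1` represented by `k`) with arcs `1→2, 1→3, 2→3, 2→4, 3→4, 4→1`. -/
def T4 : OrientedGraph (Fin 4) where
  arc a b := (a = 0 ∧ b = 1) ∨ (a = 0 ∧ b = 2) ∨ (a = 1 ∧ b = 2) ∨
    (a = 1 ∧ b = 3) ∨ (a = 2 ∧ b = 3) ∨ (a = 3 ∧ b = 0)
  irrefl := by decide
  asymm := by decide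

def IsClosedWalk {α : Type*} (r : α → α → Prop) (n : ℕ) (w : ℕ → α) : Prop :=
  (∀ i < n, r (w i) (w (i + 1))) ∧ w n = w 0

section ClosedWalk

variable {α : Type*} {r : α → α → Prop} {n : ℕ} {w : ℕ → α}

lemma isClosedWalk_mod (h : ∀ i < n, r (w i) (w ((i + 1) % n))) :
    IsClosedWalk r n (fun i => w (i % n)) := by
  refine ⟨fun i hi => ?_, by simp⟩
  simpa [Nat.mod_eq_of_lt hi] using h i hi

lemma IsClosedWalk.shift (hw : IsClosedWalk r n w) {i j : ℕ} (hij : i ≤ j) (hjn : j ≤ n)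
    (heq : w i = w j) : IsClosedWalk r (j - i) (fun t => w (i + t)) :=
  ⟨fun t ht => by simpa only [← add_assoc] using hw.1 (i + t) (by omega),
    by simp [Nat.add_sub_cancel' hij, heq]⟩

lemma IsClosedWalk.excise (hw : IsClosedWalk r n w) {i j : ℕ} (hij : i ≤ j) (hjn : j < n)
    (heq : w i = w j) :
    IsClosedWalk r (n - (j - i)) (fun t => if t ≤ i then w t else w (t + (j - i))) := by
  refine ⟨fun t ht => ?_, ?_⟩
  · rcases lt_trichotomy t i with hlt | rfl | hgt
    · simpa [hlt.le, Nat.succ_le_of_lt hlt] using hw.1 t (by omega)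
    · simpa [heq, show t + 1 + (j - t) = j + 1 by omega] using hw.1 j hjn
    · simpa [show ¬ t ≤ i by omega, show ¬ t < i by omega,
        show t + 1 + (j - i) = t + (j - i) + 1 by omega]
        using hw.1 (t + (j - i)) (by omega)
  · simp [show ¬ n - (j - i) ≤ i by omega, show n - (j - i) + (j - i) = n by omega, hw.2]

lemma exists_lt_map_eq_of_card_lt [Fintype α] (w : ℕ → α) (hn : Fintype.card α < n) :
    ∃ i j, i < j ∧ j < n ∧ w i = w j := by
  obtain ⟨a, b, hab, h⟩ :=
    Fintype.exists_ne_map_eq_of_card_lt (fun k : Fin n => w k) (by simpa using hn)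
  rcases Fin.lt_or_lt_of_ne hab with hlt | hlt
  · exact ⟨a, b, hlt, b.2, h⟩
  · exact ⟨b, a, hlt, a.2, h.symm⟩

lemma IsClosedWalk.exists_length_le_card_not_dvd [Fintype α] {k : ℕ} (hw : IsClosedWalk r n w)
    (hk : ¬ k ∣ n) : ∃ m ≤ Fintype.card α, ¬ k ∣ m ∧ ∃ w' : ℕ → α, IsClosedWalk r m w' := by
  induction n using Nat.strong_induction_on generalizing w with
  | _ n ih =>
    by_cases hn : n ≤ Fintype.card α
    · exact ⟨n, hn, hk, w, hw⟩
    obtain ⟨i, j, hij, hjn, heq⟩ := exists_lt_map_eq_of_card_lt w (not_le.mp hn)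
    by_cases hd : k ∣ j - i
    · exact ih _ (by omega) (hw.excise hij.le hjn heq)
        fun h => hk (by simpa [Nat.sub_add_cancel (show j - i ≤ n by omega)] using dvd_add h hd)
    · exact ih _ (by omega) (hw.shift hij.le hjn.le heq) hd

end ClosedWalk

namespace OrientedGraph

variable {V W : Type*} {G : OrientedGraph V} {H : OrientedGraph W}

def IsTournament (G : OrientedGraph V) : Prop :=
  ∀ u v, u ≠ v → G.arc u v ∨ G.arc v u

lemma IsHom.injective_of_isTournament {φ : V → W} (hφ : G.IsHom H φ) (hG : G.IsTournament) :
    Function.Injective φ := by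
  intro u v huv
  by_contra hne
  rcases hG u v hne with h | h
  · exact H.irrefl _ (huv ▸ hφ u v h)
  · exact H.irrefl _ (huv ▸ hφ v u h)

lemma IsHom.arc_iff_of_isTournament {φ : V → W} (hφ : G.IsHom H φ) (hG : G.IsTournament)
    (u v : V) : H.arc (φ u) (φ v) ↔ G.arc u v := by
  refine ⟨fun h => ?_, hφ u v⟩
  have hne : u ≠ v := by rintro rfl; exact H.irrefl _ h
  exact (hG u v hne).resolve_right fun h' => H.asymm _ _ h (hφ v u h')

lemma IsTournament.exists_iso_of_isHom [Fintype V] [Fintype W] (hG : G.IsTournament)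
    (hcard : Fintype.card W = Fintype.card V) {φ : V → W} (hφ : G.IsHom H φ) :
    ∃ e : W ≃ V, ∀ u v, H.arc u v ↔ G.arc (e u) (e v) := by
  have hbij : Function.Bijective φ :=
    (Fintype.bijective_iff_injective_and_card φ).mpr ⟨hφ.injective_of_isTournament hG, hcard.symm⟩
  refine ⟨(Equiv.ofBijective φ hbij).symm, fun u v => ?_⟩
  conv_lhs => rw [← (Equiv.ofBijective φ hbij).apply_symm_apply u,
    ← (Equiv.ofBijective φ hbij).apply_symm_apply v]
  exact hφ.arc_iff_of_isTournament hG _ _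

lemma exists_four_cycle [Fintype W] (hcard : Fintype.card W ≤ 4) {n : ℕ} {w : ℕ → W}
    (hw : IsClosedWalk H.arc n w) (h3 : ¬ 3 ∣ n) :
    ∃ p q r s, p ≠ r ∧ q ≠ s ∧ H.arc p q ∧ H.arc q r ∧ H.arc r s ∧ H.arc s p := by
  obtain ⟨m, hm, hm3, c, ⟨hstep, hclosed⟩⟩ := hw.exists_length_le_card_not_dvd h3
  replace hm := hm.trans hcard
  interval_cases m
  · exact absurd (dvd_zero 3) hm3
  · exact absurd (hclosed ▸ hstep 0 one_pos) (H.irrefl _)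
  · exact absurd (hclosed ▸ hstep 1 one_lt_two) (H.asymm _ _ (hstep 0 two_pos))
  · exact absurd dvd_rfl hm3
  · refine ⟨c 0, c 1, c 2, c 3, fun h => ?_, fun h => ?_, hstep 0 (by norm_num),
      hstep 1 (by norm_num), hstep 2 (by norm_num), hclosed ▸ hstep 3 (by norm_num)⟩
    · exact H.asymm _ _ (hstep 0 (by norm_num)) (h ▸ hstep 1 (by norm_num))
    · exact H.asymm _ _ (hstep 1 (by norm_num)) (h ▸ hstep 2 (by norm_num))

lemma isTournament_T4 : T4.IsTournament := by
  unfold IsTournament T4; decide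

lemma isHom_T4 {p q r s : W} (hpq : H.arc p q) (hqr : H.arc q r) (hrs : H.arc r s)
    (hsp : H.arc s p) (hpr : H.arc p r) (hqs : H.arc q s) : T4.IsHom H ![p, q, r, s] := by
  rintro u v (⟨rfl, rfl⟩ | ⟨rfl, rfl⟩ | ⟨rfl, rfl⟩ | ⟨rfl, rfl⟩ | ⟨rfl, rfl⟩ | ⟨rfl, rfl⟩) <;>
    assumption

lemma IsTournament.exists_iso_T4 [Fintype W] (hH : H.IsTournament) (hcard : Fintype.card W = 4)
    {p q r s : W} (hpr : p ≠ r) (hqs : q ≠ s) (hpq : H.arc p q) (hqr : H.arc q r)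
    (hrs : H.arc r s) (hsp : H.arc s p) :
    ∃ e : W ≃ Fin 4, ∀ u v, H.arc u v ↔ T4.arc (e u) (e v) := by
  have key := fun {a b c d : W} (hab : H.arc a b) (hbc : H.arc b c) (hcd : H.arc c d)
      (hda : H.arc d a) (hac : H.arc a c) (hbd : H.arc b d) =>
    isTournament_T4.exists_iso_of_isHom (by simpa using hcard) (isHom_T4 hab hbc hcd hda hac hbd)
  rcases hH p r hpr with hac | hca <;> rcases hH q s hqs with hbd | hdb
  · exact key hpq hqr hrs hsp hac hbd
  · exact key hsp hpq hqr hrs hdb hac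
  · exact key hqr hrs hsp hpq hbd hca
  · exact key hrs hsp hpq hqr hca hdb

end OrientedGraph

theorem tournament_with_hom_from_directed_cycle_iso_T4_general (l : ℕ)
    (hmod : l % 6 = 4) (W : Type) [Fintype W] (hcard : Fintype.card W = 4)
    (H : OrientedGraph W) (htour : ∀ u v : W, u ≠ v → H.arc u v ∨ H.arc v u)
    (hhom : ∃ φ : ℕ → W, ∀ i < l, H.arc (φ i) (φ ((i + 1) % l))) :
    ∃ e : W ≃ Fin 4, ∀ u v : W, H.arc u v ↔ T4.arc (e u) (e v) := by
  obtain ⟨φ, hφ⟩ := hhom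
  have hw : IsClosedWalk H.arc l (fun i => φ (i % l)) := isClosedWalk_mod hφ
  obtain ⟨p, q, r, s, hpr, hqs, hpq, hqr, hrs, hsp⟩ :=
    H.exists_four_cycle hcard.le hw (by omega)
  exact OrientedGraph.IsTournament.exists_iso_T4 htour hcard hpr hqs hpq hqr hrs hsp

/-- For `l ≥ 4` with `l ≡ 4 (mod 6)`, every tournament on 4 vertices
admitting a homomorphism from the directed cycle of length `l` is isomorphic to `T4`. -/
theorem tournament_with_hom_from_directed_cycle_iso_T4 (l : ℕ) (hl : 4 ≤ l)
    (hmod : l % 6 = 4) (W : Type) [Fintype W] (hcard : Fintype.card W = 4)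
    (H : OrientedGraph W) (htour : ∀ u v : W, u ≠ v → H.arc u v ∨ H.arc v u)
    (hhom : ∃ φ : ℕ → W, ∀ i < l, H.arc (φ i) (φ ((i + 1) % l))) :
    ∃ e : W ≃ Fin 4, ∀ u v : W, H.arc u v ↔ T4.arc (e u) (e v) :=
  tournament_with_hom_from_directed_cycle_iso_T4_general l hmod W hcard H htour hhom
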